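/- For α > 0 not an integer and m ∈ ℕ, the two functions Ω₁(x,λ) := (Γ(m+α)/(Γ(m+1)Γ(α))) [((α+m)/α) M(−m,α+1,−x) M(−λ,α,x) + (λ/α) M(−m,α,−x) M(−λ+1,α+1,x)] and Ω₂(x,λ) (defined analogously with the second Frobenius solution) satisfy the normalization: the limit as x→0⁺ of −(α Ω₁(x,λ) + x ∂_x Ω₁(x,λ))/[L_m^{α−1}(0)]² equals 1/C where C = −Γ(m+α)/((λ+m+α)Γ(α)Γ(m+1)); in particular this limit is finite and nonzero for λ ≠ −m−α. -/

import Mathlib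

open Filter Topology in
/-- Generalized binomial coefficient `binom(a, m) = a(a-1)⋯(a-m+1)/m!`. -/
noncomputable def genBinom (a : ℝ) (m : ℕ) : ℝ :=
  (∏ i ∈ Finset.range m, (a - i)) / m.factorial

/-- The generalized Laguerre polynomial
`L_n^α(x) = Σ_{k=0}^n (−1)^k binom(n+α, n−k) x^k / k!`. -/
noncomputable def laguerre (n : ℕ) (α x : ℝ) : ℝ :=
  ∑ k ∈ Finset.range (n + 1),
    (-1 : ℝ) ^ k * genBinom ((n : ℝ) + α) (n - k) * x ^ k / k.factorial

/-- The rising factorial `(a)^{(k)} = a(a+1)⋯(a+k−1)`. -/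
noncomputable def risingFactorial (a : ℝ) (k : ℕ) : ℝ :=
  ∏ i ∈ Finset.range k, (a + i)

/-- Kummer's confluent hypergeometric function
`M(a,b,x) = ₁F₁(a;b;x) = Σ_{k≥0} (a)^{(k)} x^k / ((b)^{(k)} k!)`. -/
noncomputable def kummerM (a b x : ℝ) : ℝ :=
  ∑' k : ℕ, risingFactorial a k * x ^ k / (risingFactorial b k * k.factorial)

/-- The solution
`Ω₁(x,λ) = (Γ(m+α)/(Γ(m+1)Γ(α))) [((α+m)/α) M(−m,α+1,−x) M(−λ,α,x)
  + (λ/α) M(−m,α,−x) M(−λ+1,α+1,x)]`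
of the Type I exceptional Laguerre equation. -/
noncomputable def Omega1 (m : ℕ) (α lam x : ℝ) : ℝ :=
  Real.Gamma ((m : ℝ) + α) / (Real.Gamma ((m : ℝ) + 1) * Real.Gamma α) *
    ((α + (m : ℝ)) / α * kummerM (-(m : ℝ)) (α + 1) (-x) * kummerM (-lam) α x +
      lam / α * kummerM (-(m : ℝ)) α (-x) * kummerM (-lam + 1) (α + 1) x)

/-!
Every Kummer function `M(a, b, ·)` is entire (ratio test, or a polynomial when `a ∈ -ℕ`), so
`Ω₁(·, λ)` is analytic at `0`. Hence `x ∂ₓΩ₁(x, λ) → 0` and the quasi-derivative tends to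
`-α Ω₁(0, λ) / [L_m^{α-1}(0)]²`. Since `M(a, b, 0) = 1`, `Ω₁(0, λ) = (λ + m + α) L_m^{α-1}(0) / α`
with `L_m^{α-1}(0) = (α)^{(m)}/m! = Γ(m+α)/(Γ(α) Γ(m+1))`, which gives `1/C`.
-/

open Filter Topology FormalMultilinearSeries

lemma risingFactorial_succ (a : ℝ) (k : ℕ) :
    risingFactorial a (k + 1) = risingFactorial a k * (a + k) :=
  Finset.prod_range_succ _ _

lemma risingFactorial_ne_zero {a : ℝ} (ha : ∀ k : ℕ, a ≠ -k) (m : ℕ) :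
    risingFactorial a m ≠ 0 :=
  Finset.prod_ne_zero_iff.mpr fun k _ h => ha k (eq_neg_of_add_eq_zero_left h)

lemma Gamma_add_nat_eq_risingFactorial_mul {a : ℝ} (ha : ∀ k : ℕ, a ≠ -k) (m : ℕ) :
    Real.Gamma (a + m) = risingFactorial a m * Real.Gamma a := by
  induction m with
  | zero => simp [risingFactorial]
  | succ m ih =>
    have ham : a + m ≠ 0 := fun h => ha m (eq_neg_of_add_eq_zero_left h)
    rw [Nat.cast_succ, ← add_assoc, Real.Gamma_add_one ham, ih, risingFactorial_succ]
    ring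

lemma laguerre_sub_one_zero (m : ℕ) (a : ℝ) :
    laguerre m (a - 1) 0 = risingFactorial a m / m.factorial := by
  have hbinom : genBinom (m + (a - 1)) m = risingFactorial a m / m.factorial := by
    rw [genBinom, risingFactorial, ← Finset.prod_range_reflect (fun j : ℕ => a + j) m]
    congr 1
    refine Finset.prod_congr rfl fun i hi => ?_
    have hi : i + 1 ≤ m := Finset.mem_range.mp hi
    rw [Nat.sub_sub, Nat.add_comm 1 i, Nat.cast_sub hi]
    push_cast
    ring
  rw [laguerre, Finset.sum_eq_single 0 (fun k _ hk => by simp [zero_pow hk]) (by simp)]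
  simp [hbinom]

noncomputable def kummerCoeff (a b : ℝ) (k : ℕ) : ℝ :=
  risingFactorial a k / (risingFactorial b k * k.factorial)

lemma kummerCoeff_succ (a b : ℝ) (k : ℕ) :
    kummerCoeff a b (k + 1) = kummerCoeff a b k * ((a + k) / ((b + k) * (k + 1))) := by
  simp only [kummerCoeff, risingFactorial_succ, Nat.factorial_succ, div_mul_div_comm]
  push_cast
  ring_nf

lemma kummerCoeff_eq_zero_of_le {a b : ℝ} {n k : ℕ} (hn : kummerCoeff a b n = 0) (hk : n ≤ k) :
    kummerCoeff a b k = 0 := by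
  induction k, hk using Nat.le_induction with
  | base => exact hn
  | succ k _ ih => rw [kummerCoeff_succ, ih, zero_mul]

lemma tendsto_kummerCoeff_ratio (a b : ℝ) :
    Tendsto (fun k : ℕ => (a + k) / ((b + k) * (k + 1))) atTop (𝓝 0) := by
  have hquot : Tendsto (fun k : ℕ => (a + 1 * k) / (b + 1 * k)) atTop (𝓝 (1 / 1)) :=
    tendsto_add_mul_div_add_mul_atTop_nhds a b 1 one_ne_zero
  have hprod := hquot.mul (tendsto_one_div_add_atTop_nhds_zero_nat (𝕜 := ℝ))
  rw [mul_zero] at hprod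
  refine hprod.congr fun k => ?_
  simp only [div_mul_div_comm, mul_one, one_mul]

lemma radius_ofScalars_kummerCoeff (a b : ℝ) : (ofScalars ℝ (kummerCoeff a b)).radius = ⊤ := by
  by_cases hzero : ∃ n, kummerCoeff a b n = 0
  · obtain ⟨n, hn⟩ := hzero
    refine radius_eq_top_of_eventually_eq_zero _ ?_
    filter_upwards [eventually_ge_atTop n] with k hk
    exact ofScalars_eq_zero_of_scalar_zero ℝ (kummerCoeff_eq_zero_of_le hn hk)
  · push Not at hzero
    refine ofScalars_radius_eq_top_of_tendsto _ _ (Eventually.of_forall hzero) ?_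
    have hnorm := (tendsto_kummerCoeff_ratio a b).norm
    rw [norm_zero] at hnorm
    refine hnorm.congr fun k => ?_
    rw [kummerCoeff_succ, norm_mul,
      mul_div_cancel_left₀ _ (norm_ne_zero_iff.mpr (hzero k))]

lemma kummerM_eq_ofScalarsSum (a b : ℝ) : kummerM a b = ofScalarsSum (kummerCoeff a b) := by
  funext x
  rw [ofScalars_sum_eq, kummerM]
  exact tsum_congr fun k => by rw [smul_eq_mul, kummerCoeff, div_mul_eq_mul_div]

lemma analyticAt_kummerM (a b x : ℝ) : AnalyticAt ℝ (kummerM a b) x := by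
  have hradius := radius_ofScalars_kummerCoeff a b
  rw [kummerM_eq_ofScalarsSum]
  refine ((ofScalars ℝ (kummerCoeff a b)).hasFPowerSeriesOnBall ?_).analyticAt_of_mem ?_ <;>
    simp [hradius]

lemma kummerM_zero (a b : ℝ) : kummerM a b 0 = 1 := by
  rw [kummerM, tsum_eq_single 0 fun k hk => by simp [zero_pow hk]]
  simp [risingFactorial]

lemma analyticAt_Omega1 (m : ℕ) (α lam x : ℝ) : AnalyticAt ℝ (Omega1 m α lam) x := by
  have hneg (a b : ℝ) : AnalyticAt ℝ (fun y => kummerM a b (-y)) x :=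
    (analyticAt_kummerM a b (-x)).comp analyticAt_id.neg
  unfold Omega1
  exact analyticAt_const.mul
    ((analyticAt_const.mul (hneg _ _)).mul (analyticAt_kummerM _ _ x) |>.add
      ((analyticAt_const.mul (hneg _ _)).mul (analyticAt_kummerM _ _ x)))

lemma Omega1_zero (m : ℕ) (α lam : ℝ) :
    Omega1 m α lam 0 = Real.Gamma ((m : ℝ) + α) / (Real.Gamma ((m : ℝ) + 1) * Real.Gamma α) *
      ((lam + m + α) / α) := by
  simp only [Omega1, neg_zero, kummerM_zero]
  ring

lemma tendsto_mul_add_mul_deriv {f : ℝ → ℝ} (hf : AnalyticAt ℝ f 0) (c : ℝ) :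
    Tendsto (fun x => c * f x + x * deriv f x) (𝓝 0) (𝓝 (c * f 0)) := by
  have hcont : ContinuousAt (fun x => c * f x + x * deriv f x) 0 := by
    have := hf.deriv.continuousAt
    have := hf.continuousAt
    fun_prop
  simpa using hcont.tendsto

theorem omega1_normalization_general (m : ℕ) (α : ℝ) (hα : 0 < α) (lam : ℝ) :
    Filter.Tendsto
      (fun x : ℝ =>
        -(α * Omega1 m α lam x + x * deriv (fun y => Omega1 m α lam y) x) /
          (laguerre m (α - 1) 0) ^ 2)
      (nhdsWithin 0 (Set.Ioi 0))
      (nhds (1 / (-Real.Gamma ((m : ℝ) + α) /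
        ((lam + (m : ℝ) + α) * Real.Gamma α * Real.Gamma ((m : ℝ) + 1))))) := by
  have hα' : ∀ k : ℕ, α ≠ -k := fun k => by linarith [k.cast_nonneg (α := ℝ)]
  have hlim := ((tendsto_mul_add_mul_deriv (analyticAt_Omega1 m α lam 0) α).neg.div_const
    (laguerre m (α - 1) 0 ^ 2)).mono_left (nhdsWithin_le_nhds (s := Set.Ioi 0))
  convert hlim using 2
  have hrising := risingFactorial_ne_zero hα' m
  have hΓ := Real.Gamma_ne_zero hα'
  rw [Omega1_zero, laguerre_sub_one_zero, add_comm (m : ℝ) α,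
    Gamma_add_nat_eq_risingFactorial_mul hα', Real.Gamma_nat_eq_factorial]
  field_simp

/-- Normalization of `Ω₁`: the quasi-derivative
`lim_{x→0⁺} −(α Ω₁(x,λ) + x ∂ₓΩ₁(x,λ)) / [L_m^{α−1}(0)]²`
equals `1/C` where `C = −Γ(m+α)/((λ+m+α)Γ(α)Γ(m+1))`; in particular the limit
is finite and nonzero for `λ ≠ −m−α`. -/
theorem omega1_normalization (m : ℕ) (hm : 1 ≤ m) (α : ℝ) (hα : 0 < α)
    (hαint : ∀ k : ℤ, α ≠ (k : ℝ)) (lam : ℝ) (hlam : lam ≠ -(m : ℝ) - α) :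
    Filter.Tendsto
      (fun x : ℝ =>
        -(α * Omega1 m α lam x + x * deriv (fun y => Omega1 m α lam y) x) /
          (laguerre m (α - 1) 0) ^ 2)
      (nhdsWithin 0 (Set.Ioi 0))
      (nhds (1 / (-Real.Gamma ((m : ℝ) + α) /
        ((lam + (m : ℝ) + α) * Real.Gamma α * Real.Gamma ((m : ℝ) + 1))))) :=
  omega1_normalization_general m α hα lam
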